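/- Let r ≥ 2 be an integer. In the graph G_r: (a) for all integers 2 ≤ i ≤ j ≤ r there exist a vertex in level i and a vertex in level j that are distinct and adjacent in G_r; (b) within each level k, consecutive vertices are adjacent, i.e., (k, m) is adjacent to (k, m+1) for 1 ≤ m < 2^k and (k, 2^k) is adjacent to (k, 1), so each level induces a connected subgraph. Consequently, contracting each level of G_r to a single vertex yields a complete graph on the r − 1 levels, so G_r has a clique minor of size r − 1. -/

import Mathlib

/-- Polar radius of the level-`k` vertices of the construction `G_r`. -/
noncomputable def rho (r k : ℕ) : ℝ :=
  Real.arsinh (Real.sinh (r : ℝ) / Real.sin (Real.pi / 2 ^ k))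

/-- Polar angle of the `m`-th vertex of level `k`. -/
noncomputable def theta (k m : ℕ) : ℝ :=
  (2 * (m : ℝ) - 1) * Real.pi / 2 ^ k

/-- Vertices of `G_r`: the root (`none`) together with pairs `(k, m)`. -/
abbrev Vertex : Type := Option (ℕ × ℕ)

/-- The pairs `(k, m)` with `2 ≤ k ≤ r` and `1 ≤ m ≤ 2^k` (together with the
root) are the actual vertices of `G_r`. -/
def ValidVertex (r : ℕ) : Vertex → Prop
  | none => True
  | some (k, m) => 2 ≤ k ∧ k ≤ r ∧ 1 ≤ m ∧ m ≤ 2 ^ k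

/-- Two vertices represent points at hyperbolic distance at most `2r`
(expressed via the hyperbolic law of cosines). -/
def HypClose (r : ℕ) : Vertex → Vertex → Prop
  | none, none => False
  | none, some (k, _) => rho r k ≤ 2 * (r : ℝ)
  | some (k, _), none => rho r k ≤ 2 * (r : ℝ)
  | some (k, m), some (k', m') =>
      Real.cosh (rho r k) * Real.cosh (rho r k') -
          Real.sinh (rho r k) * Real.sinh (rho r k') *
            Real.cos (theta k m - theta k' m') ≤ Real.cosh (2 * (r : ℝ))

/-- The hyperbolic uniform disk graph `G_r` of the construction: two distinct
vertices are adjacent iff the corresponding points have hyperbolic distance at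
most `2r`. -/
def Gr (r : ℕ) : SimpleGraph Vertex where
  Adj u v := u ≠ v ∧ HypClose r u v
  symm := by
    constructor
    rintro (_ | ⟨k, m⟩) (_ | ⟨k', m'⟩) ⟨hne, h⟩
    · exact ⟨hne.symm, h⟩
    · exact ⟨hne.symm, h⟩
    · exact ⟨hne.symm, h⟩
    · refine ⟨hne.symm, ?_⟩
      simp only [HypClose] at h ⊢
      have hc : Real.cos (theta k' m' - theta k m) = Real.cos (theta k m - theta k' m') := by
        rw [show theta k' m' - theta k m = -(theta k m - theta k' m') by ring, Real.cos_neg]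
      have h1 : Real.cosh (rho r k') * Real.cosh (rho r k) =
          Real.cosh (rho r k) * Real.cosh (rho r k') := mul_comm _ _
      have h2 : Real.sinh (rho r k') * Real.sinh (rho r k) =
          Real.sinh (rho r k) * Real.sinh (rho r k') := mul_comm _ _
      rw [hc, h1, h2]
      exact h
  loopless := by
    constructor
    rintro v ⟨hne, _⟩
    exact hne rfl

/-!
Write the law-of-cosines quantity at angle `2x` as `cosh (ρ - ρ') + 2 sinh ρ sinh ρ' sin² x` and
use `sinh ρ_k · sin (π / 2^k) = sinh r`. Two consecutive vertices of a level are then at distance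
exactly `2r`, since `cosh (2r) = 1 + 2 sinh² r`. For levels `i < j`, the vertex `(j, 2^(j-i-1))`
is at angle `π / 2^j` from `(i, 1)`: the angular term is at most `sinh² r` because
`2 sin² (π / 2^(j+1)) ≤ sin (π / 2^i) sin (π / 2^j)` (Jordan's inequality and `π ≤ 4`), and the
radial term `cosh (ρ_i - ρ_j) ≤ 1 + sinh ρ_i + sinh ρ_j` is at most `1 + sinh² r` because
`sinh r ≥ 2^r` for `r ≥ 3`.
-/

section Construction

open Real

/-- `cosh` of the hyperbolic distance between the points with polar coordinates `(a, α)` and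
`(b, β)` when `φ = α - β`, by the hyperbolic law of cosines. -/
noncomputable def hypCoshDist (a b φ : ℝ) : ℝ :=
  cosh a * cosh b - sinh a * sinh b * cos φ

theorem hypCoshDist_two_mul (a b x : ℝ) :
    hypCoshDist a b (2 * x) = cosh (a - b) + 2 * sinh a * sinh b * sin x ^ 2 := by
  rw [hypCoshDist, cosh_sub, cos_two_mul_eq_one_sub]
  ring

theorem cosh_le_one_add_sinh {x : ℝ} (hx : 0 ≤ x) : cosh x ≤ 1 + sinh x := by
  have h := cosh_sub_sinh x
  have : exp (-x) ≤ 1 := exp_le_one_iff.2 (neg_nonpos.2 hx)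
  linarith

theorem cosh_sub_le_one_add_sinh_add_sinh {a b : ℝ} (ha : 0 ≤ a) (hb : 0 ≤ b) :
    cosh (a - b) ≤ 1 + sinh a + sinh b := by
  have hprod : cosh a * cosh b ≤ (1 + sinh a) * (1 + sinh b) :=
    mul_le_mul (cosh_le_one_add_sinh ha) (cosh_le_one_add_sinh hb) (cosh_pos b).le
      (by linarith [sinh_nonneg_iff.2 ha])
  rw [cosh_sub]
  nlinarith [sinh_nonneg_iff.2 ha, sinh_nonneg_iff.2 hb]

theorem two_pow_le_sinh {n : ℕ} (hn : 3 ≤ n) : (2 : ℝ) ^ n ≤ sinh n := by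
  have hexp : (2 : ℝ) ^ (n + 1) + 1 ≤ exp n := by
    induction n, hn using Nat.le_induction with
    | base =>
      have : (2.7182818283 : ℝ) ^ 3 ≤ exp 1 ^ 3 := by gcongr; exact exp_one_gt_d9.le
      rw [← exp_nat_mul] at this
      norm_num at this ⊢
      linarith
    | succ n _ ih =>
      rw [Nat.cast_succ, exp_add, pow_succ]
      nlinarith [add_one_le_exp 1, exp_pos n]
  have : exp (-n) ≤ 1 := exp_le_one_iff.2 (neg_nonpos.2 n.cast_nonneg)
  rw [pow_succ] at hexp
  rw [sinh_eq]
  linarith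

theorem sin_pi_div_two_pow_nonneg (k : ℕ) : 0 ≤ sin (π / 2 ^ k) :=
  sin_nonneg_of_nonneg_of_le_pi (by positivity)
    (div_le_self pi_pos.le (one_le_pow₀ one_le_two))

theorem two_div_two_pow_le_sin {k : ℕ} (hk : 1 ≤ k) : 2 / 2 ^ k ≤ sin (π / 2 ^ k) := by
  have h2k : (2 : ℝ) ≤ 2 ^ k := le_self_pow₀ one_le_two (by omega)
  calc 2 / 2 ^ k = 2 / π * (π / 2 ^ k) := by field_simp
    _ ≤ sin (π / 2 ^ k) :=
      mul_le_sin (by positivity) (div_le_div_of_nonneg_left pi_pos.le two_pos h2k)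

theorem sin_pi_div_two_pow_pos {k : ℕ} (hk : 1 ≤ k) : 0 < sin (π / 2 ^ k) :=
  lt_of_lt_of_le (by positivity) (two_div_two_pow_le_sin hk)

theorem two_mul_sin_sq_le_sin_mul_sin {i j : ℕ} (hi : 1 ≤ i) (hij : i < j) :
    2 * sin (π / 2 ^ (j + 1)) ^ 2 ≤ sin (π / 2 ^ i) * sin (π / 2 ^ j) := by
  set t : ℝ := 2 ^ j
  have ht : 0 < t := by positivity
  have hsi : 4 / t ≤ sin (π / 2 ^ i) := by
    have h2i : (2 : ℝ) ^ i * 2 ≤ t := by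
      rw [← pow_succ]; exact pow_le_pow_right₀ one_le_two hij
    refine le_trans ?_ (two_div_two_pow_le_sin hi)
    rw [div_le_div_iff₀ ht (by positivity)]
    linarith
  have hsj : 2 / t ≤ sin (π / 2 ^ j) := two_div_two_pow_le_sin (by omega)
  have hhalf : sin (π / 2 ^ (j + 1)) ≤ π / (2 * t) := by
    rw [pow_succ, mul_comm]; exact sin_le (by positivity)
  calc 2 * sin (π / 2 ^ (j + 1)) ^ 2 ≤ 2 * (π / (2 * t)) ^ 2 := by
        gcongr; exact sin_pi_div_two_pow_nonneg _
    _ ≤ 2 * (4 / (2 * t)) ^ 2 := by gcongr; exact pi_le_four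
    _ = 4 / t * (2 / t) := by field_simp; ring
    _ ≤ sin (π / 2 ^ i) * sin (π / 2 ^ j) :=
      mul_le_mul hsi hsj (by positivity) ((by positivity : (0 : ℝ) ≤ 4 / t).trans hsi)

theorem rho_nonneg (r k : ℕ) : 0 ≤ rho r k :=
  arsinh_nonneg_iff.2 (div_nonneg (sinh_nonneg_iff.2 r.cast_nonneg) (sin_pi_div_two_pow_nonneg k))

theorem sinh_rho_mul_sin {k : ℕ} (r : ℕ) (hk : 1 ≤ k) :
    sinh (rho r k) * sin (π / 2 ^ k) = sinh r := by
  rw [rho, sinh_arsinh, div_mul_cancel₀ _ (sin_pi_div_two_pow_pos hk).ne']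

theorem two_mul_sinh_rho_le_sinh_sq {r k : ℕ} (hk : 1 ≤ k) (hkr : k ≤ r) (hr : 3 ≤ r) :
    2 * sinh (rho r k) ≤ sinh r ^ 2 := by
  have hpow : (2 : ℝ) ^ k ≤ 2 ^ r := pow_le_pow_right₀ one_le_two hkr
  have hsin : 2 ≤ 2 ^ k * sin (π / 2 ^ k) := by
    have := two_div_two_pow_le_sin hk
    rwa [div_le_iff₀' (by positivity)] at this
  calc 2 * sinh (rho r k) ≤ 2 ^ k * sin (π / 2 ^ k) * sinh (rho r k) := by
        gcongr; exact sinh_nonneg_iff.2 (rho_nonneg r k)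
    _ = 2 ^ k * sinh r := by rw [← sinh_rho_mul_sin r hk]; ring
    _ ≤ sinh r * sinh r := by
      rw [mul_comm]; gcongr; exact hpow.trans (two_pow_le_sinh hr)
    _ = sinh r ^ 2 := (sq _).symm

/-- Consecutive points of a level are at distance exactly `2r`. -/
theorem hypCoshDist_rho_rho_two_mul {k : ℕ} (r : ℕ) (hk : 1 ≤ k) :
    hypCoshDist (rho r k) (rho r k) (2 * (π / 2 ^ k)) = cosh (2 * r) := by
  rw [hypCoshDist_two_mul, sub_self, cosh_zero, cosh_two_mul, cosh_sq',
    ← sinh_rho_mul_sin r hk]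
  ring

theorem hypCoshDist_rho_rho_le {r i j : ℕ} (hi : 2 ≤ i) (hij : i < j) (hjr : j ≤ r) :
    hypCoshDist (rho r i) (rho r j) (π / 2 ^ j) ≤ cosh (2 * r) := by
  have hangle : π / 2 ^ j = 2 * (π / 2 ^ (j + 1)) := by rw [pow_succ]; field_simp
  have hradial := cosh_sub_le_one_add_sinh_add_sinh (rho_nonneg r i) (rho_nonneg r j)
  have hsinh_i := two_mul_sinh_rho_le_sinh_sq (k := i) (by omega) (by omega) (by omega : 3 ≤ r)
  have hsinh_j := two_mul_sinh_rho_le_sinh_sq (by omega) hjr (by omega : 3 ≤ r)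
  have hangular : 2 * sinh (rho r i) * sinh (rho r j) * sin (π / 2 ^ (j + 1)) ^ 2 ≤ sinh r ^ 2 :=
    calc 2 * sinh (rho r i) * sinh (rho r j) * sin (π / 2 ^ (j + 1)) ^ 2
        = sinh (rho r i) * sinh (rho r j) * (2 * sin (π / 2 ^ (j + 1)) ^ 2) := by ring
      _ ≤ sinh (rho r i) * sinh (rho r j) * (sin (π / 2 ^ i) * sin (π / 2 ^ j)) :=
        mul_le_mul_of_nonneg_left (two_mul_sin_sq_le_sin_mul_sin (by omega) hij)
          (mul_nonneg (sinh_nonneg_iff.2 (rho_nonneg r i)) (sinh_nonneg_iff.2 (rho_nonneg r j)))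
      _ = sinh r ^ 2 := by
        rw [mul_mul_mul_comm, sinh_rho_mul_sin r (by omega), sinh_rho_mul_sin r (by omega), sq]
  rw [hangle, hypCoshDist_two_mul, cosh_two_mul, cosh_sq']
  linarith

theorem gr_adj_some_iff {r k m k' m' : ℕ} :
    (Gr r).Adj (some (k, m)) (some (k', m')) ↔
      (k, m) ≠ (k', m') ∧
        hypCoshDist (rho r k) (rho r k') (theta k m - theta k' m') ≤ cosh (2 * r) := by
  simp only [Gr, HypClose, hypCoshDist, ne_eq, Option.some.injEq]

theorem gr_adj_succ {k : ℕ} (r m : ℕ) (hk : 1 ≤ k) :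
    (Gr r).Adj (some (k, m)) (some (k, m + 1)) := by
  refine gr_adj_some_iff.2 ⟨by simp, ?_⟩
  have hangle : theta k m - theta k (m + 1) = -(2 * (π / 2 ^ k)) := by
    unfold theta; push_cast; ring
  rw [hangle, hypCoshDist, cos_neg, ← hypCoshDist, hypCoshDist_rho_rho_two_mul r hk]

theorem gr_adj_two_pow_one {k : ℕ} (r : ℕ) (hk : 1 ≤ k) :
    (Gr r).Adj (some (k, 2 ^ k)) (some (k, 1)) := by
  refine gr_adj_some_iff.2 ⟨by simpa using (Nat.one_lt_two_pow (by omega)).ne', ?_⟩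
  have hangle : theta k (2 ^ k) - theta k 1 = 2 * π - 2 * (π / 2 ^ k) := by
    unfold theta; push_cast; field_simp; ring
  rw [hangle, hypCoshDist, cos_two_pi_sub, ← hypCoshDist, hypCoshDist_rho_rho_two_mul r hk]

/-- `(i + d + 1, 2 ^ d)` is the vertex of the deeper level at angular distance
`π / 2 ^ (i + d + 1)` from `(i, 1)`. -/
theorem gr_adj_one_two_pow {r i : ℕ} (d : ℕ) (hi : 2 ≤ i) (hr : i + d + 1 ≤ r) :
    (Gr r).Adj (some (i, 1)) (some (i + d + 1, 2 ^ d)) := by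
  refine gr_adj_some_iff.2 ⟨by simp; omega, ?_⟩
  have hangle : theta i 1 - theta (i + d + 1) (2 ^ d) = π / 2 ^ (i + d + 1) := by
    unfold theta; push_cast; rw [pow_succ, pow_add]; field_simp; ring
  rw [hangle]
  exact hypCoshDist_rho_rho_le hi (by omega) hr

end Construction

theorem Gr_levels_join_and_cycles_general (r : ℕ) :
    (∀ i j : ℕ, 2 ≤ i → i ≤ j → j ≤ r →
      ∃ m m' : ℕ, 1 ≤ m ∧ m ≤ 2 ^ i ∧ 1 ≤ m' ∧ m' ≤ 2 ^ j ∧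
        (Gr r).Adj (some (i, m)) (some (j, m'))) ∧
    (∀ k m : ℕ, 2 ≤ k → k ≤ r → 1 ≤ m → m < 2 ^ k →
      (Gr r).Adj (some (k, m)) (some (k, m + 1))) ∧
    (∀ k : ℕ, 2 ≤ k → k ≤ r → (Gr r).Adj (some (k, 2 ^ k)) (some (k, 1))) := by
  refine ⟨fun i j hi hij hjr => ?_, fun k m hk _ _ _ => gr_adj_succ r m (by omega),
    fun k hk _ => gr_adj_two_pow_one r (by omega)⟩
  have hpow : 2 ≤ 2 ^ i := Nat.le_self_pow (by omega) 2
  rcases hij.eq_or_lt with rfl | hlt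
  · exact ⟨1, 2, le_rfl, by omega, by omega, hpow, gr_adj_succ r 1 (by omega)⟩
  · obtain ⟨d, rfl⟩ := Nat.exists_eq_add_of_lt hlt
    exact ⟨1, 2 ^ d, le_rfl, by omega, Nat.one_le_two_pow,
      Nat.pow_le_pow_right two_pos (by omega), gr_adj_one_two_pow d hi hjr⟩

/-- Content behind Corollary 14:
(a) every two levels `2 ≤ i ≤ j ≤ r` of `G_r` are joined by an edge between
two distinct vertices, and
(b) consecutive vertices within each level are adjacent (including the wrap-around
edge), so each level induces a cycle and is in particular connected.
Contracting each level hence yields a complete graph on the `r − 1` levels,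
i.e. a clique minor of size `r − 1` in `G_r`. -/
theorem Gr_levels_join_and_cycles (r : ℕ) (hr : 2 ≤ r) :
    (∀ i j : ℕ, 2 ≤ i → i ≤ j → j ≤ r →
      ∃ m m' : ℕ, 1 ≤ m ∧ m ≤ 2 ^ i ∧ 1 ≤ m' ∧ m' ≤ 2 ^ j ∧
        (Gr r).Adj (some (i, m)) (some (j, m'))) ∧
    (∀ k m : ℕ, 2 ≤ k → k ≤ r → 1 ≤ m → m < 2 ^ k →
      (Gr r).Adj (some (k, m)) (some (k, m + 1))) ∧
    (∀ k : ℕ, 2 ≤ k → k ≤ r → (Gr r).Adj (some (k, 2 ^ k)) (some (k, 1))) :=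
  Gr_levels_join_and_cycles_general r
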